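/- Let X = LDLᵀ with L ∈ ℝ^{n×r}, D ∈ ℝ^{r×r} symmetric, and let B ∈ ℝ^{n×m}, C ∈ ℝ^{q×n}, A ∈ ℝ^{n×n}. Then the Riccati operator value R(X) = CᵀC + AᵀX + XA − XBBᵀX admits the symmetric indefinite factorization R(X) = T M Tᵀ, where T = [Cᵀ, AᵀL, L] ∈ ℝ^{n×(q+2r)} and M is the symmetric block matrix with blocks M₁₁ = I_q, M₂₃ = M₃₂ᵀ = D, M₃₃ = −D Lᵀ B Bᵀ L D, and all other blocks zero. -/

import Mathlib

open Matrix

theorem fromCols_mul_fromBlocks_mul_transpose_fromCols {ι κ₁ κ₂ α : Type*}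
    [Fintype κ₁] [Fintype κ₂] [Semiring α]
    (U : Matrix ι κ₁ α) (V : Matrix ι κ₂ α) (P : Matrix κ₁ κ₁ α) (Q : Matrix κ₁ κ₂ α)
    (R : Matrix κ₂ κ₁ α) (S : Matrix κ₂ κ₂ α) :
    fromCols U V * fromBlocks P Q R S * (fromCols U V)ᵀ =
      U * P * Uᵀ + U * Q * Vᵀ + V * R * Uᵀ + V * S * Vᵀ := by
  rw [fromCols_mul_fromBlocks, transpose_fromCols, fromCols_mul_fromRows, Matrix.add_mul,
    Matrix.add_mul, ← add_assoc, add_right_comm (U * P * Uᵀ)]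

theorem riccati_lrsif_factorization_general {n r m q : ℕ}
    (A : Matrix (Fin n) (Fin n) ℝ) (L : Matrix (Fin n) (Fin r) ℝ)
    (D : Matrix (Fin r) (Fin r) ℝ)
    (B : Matrix (Fin n) (Fin m) ℝ) (C : Matrix (Fin q) (Fin n) ℝ) :
    let X : Matrix (Fin n) (Fin n) ℝ := L * D * Lᵀ
    let T : Matrix (Fin n) (Fin q ⊕ (Fin r ⊕ Fin r)) ℝ :=
      fromCols Cᵀ (fromCols (Aᵀ * L) L)
    let M : Matrix (Fin q ⊕ (Fin r ⊕ Fin r)) (Fin q ⊕ (Fin r ⊕ Fin r)) ℝ :=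
      fromBlocks 1 0 0 (fromBlocks 0 D D (-(D * Lᵀ * B * Bᵀ * L * D)))
    Cᵀ * C + Aᵀ * X + X * A - X * B * Bᵀ * X = T * M * Tᵀ := by
  intro X T M
  rw [fromCols_mul_fromBlocks_mul_transpose_fromCols,
    fromCols_mul_fromBlocks_mul_transpose_fromCols]
  simp only [X, transpose_transpose, transpose_mul, Matrix.mul_one, Matrix.mul_zero,
    Matrix.zero_mul, add_zero, zero_add, Matrix.mul_assoc, Matrix.mul_neg, Matrix.neg_mul]
  abel

theorem riccati_lrsif_factorization {n r m q : ℕ}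
    (A : Matrix (Fin n) (Fin n) ℝ) (L : Matrix (Fin n) (Fin r) ℝ)
    (D : Matrix (Fin r) (Fin r) ℝ) (hD : Dᵀ = D)
    (B : Matrix (Fin n) (Fin m) ℝ) (C : Matrix (Fin q) (Fin n) ℝ) :
    let X : Matrix (Fin n) (Fin n) ℝ := L * D * Lᵀ
    let T : Matrix (Fin n) (Fin q ⊕ (Fin r ⊕ Fin r)) ℝ :=
      fromCols Cᵀ (fromCols (Aᵀ * L) L)
    let M : Matrix (Fin q ⊕ (Fin r ⊕ Fin r)) (Fin q ⊕ (Fin r ⊕ Fin r)) ℝ :=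
      fromBlocks 1 0 0 (fromBlocks 0 D D (-(D * Lᵀ * B * Bᵀ * L * D)))
    Cᵀ * C + Aᵀ * X + X * A - X * B * Bᵀ * X = T * M * Tᵀ :=
  riccati_lrsif_factorization_general A L D B C
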